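/- arXiv:2410.01093 — 3 statements merged into one kernel-verified Lean document; each statement's English description precedes it below -/
import Mathlib

section
/- Under Assumption 1, the map Ψ : [0,∞) × ℝ → ℝ defined by Ψ(σ,ξ) = sup_{γ ≥ 0} L(σ,ξ,γ) is strongly convex with modulus λ·min(1,R²) on the domain [0,∞) × ℝ; that is, the function (σ,ξ) ↦ Ψ(σ,ξ) − (λ·min(1,R²)/2)·(σ² + ξ²) is convex on [0,∞) × ℝ. -/
open MeasureTheory ProbabilityTheory Real Set
open scoped BigOperators ENNReal NNReal

noncomputable section
/-- The logistic link `ρ(t) = log(1 + eᵗ)`. -/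
def rho (t : ℝ) : ℝ := Real.log (1 + Real.exp t)

/-- Its derivative `ρ'(t) = eᵗ/(1 + eᵗ)`. -/
def rho' (t : ℝ) : ℝ := Real.exp t / (1 + Real.exp t)

/-- The standard Gaussian measure on `ℝ`. -/
def stdGauss : Measure ℝ := gaussianReal 0 1

/-- `q(z) = E_G[ρ'((α_c/√α₂)·R·z + √(1 − α_c²/α₂)·R·G)]`, the conditional probability that
`Y = 1` given `Z₁ = z`. -/
def qfun (αc α₂ R z : ℝ) : ℝ :=
  ∫ g, rho' ((αc / Real.sqrt α₂) * R * z + Real.sqrt (1 - αc ^ 2 / α₂) * R * g) ∂stdGauss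

/-- Expectation of `F(Z₁, Z₂, Y)` under the joint law of `(Z₁, Z₂, Y)`:
`Z₁, Z₂` i.i.d. standard Gaussian, `Y ∈ {±1}` with `P(Y = 1 | Z₁) = q(Z₁)`. -/
def Eexp (αc α₂ R : ℝ) (F : ℝ → ℝ → ℝ → ℝ) : ℝ :=
  ∫ z₁, (∫ z₂, (qfun αc α₂ R z₁ * F z₁ z₂ 1
      + (1 - qfun αc α₂ R z₁) * F z₁ z₂ (-1)) ∂stdGauss) ∂stdGauss

/-- `V(Z₁, Z₂) = ξR√α₂·Z₁ + σ√α₂·Z₂`. -/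
def Vfun (α₂ R σ ξ z₁ z₂ : ℝ) : ℝ := ξ * R * Real.sqrt α₂ * z₁ + σ * Real.sqrt α₂ * z₂

/-- The asymptotic loss `L(σ, ξ, γ)`. -/
def Lasym (lam δ αc α₂ R σ ξ γ : ℝ) : ℝ :=
  lam * (σ ^ 2 + ξ ^ 2 * R ^ 2) / 2 - α₂ * γ * σ ^ 2 / (2 * δ) +
    Eexp αc α₂ R fun z₁ z₂ y =>
      ⨅ u : ℝ, (rho (-(y * u)) + γ / 2 * (u - Vfun α₂ R σ ξ z₁ z₂) ^ 2)

/-- Assumption 1 (parameter regularity), for the scalar parameters. -/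
def Assump1 (K₁ K₂ δ R αc α₂ : ℝ) : Prop :=
  0 < K₁ ∧ K₁ ≤ K₂ ∧ δ ∈ Icc K₁ K₂ ∧ R ∈ Icc K₁ K₂ ∧ αc ∈ Icc K₁ K₂ ∧ α₂ ∈ Icc K₁ K₂ ∧
    αc ≤ Real.sqrt α₂

/-- `(σs, ξs, γs)` is a saddle point of the asymptotic loss. -/
def Saddle (lam δ αc α₂ R σs ξs γs : ℝ) : Prop :=
  ∀ σ ξ γ : ℝ, 0 ≤ σ → 0 ≤ γ →
    Lasym lam δ αc α₂ R σ ξ γs ≤ Lasym lam δ αc α₂ R σs ξs γs ∧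
      Lasym lam δ αc α₂ R σs ξs γs ≤ Lasym lam δ αc α₂ R σs ξs γ



/-! ### Auxiliary lemmas -/

lemma one_add_exp_pos (t : ℝ) : (0:ℝ) < 1 + Real.exp t := by positivity

lemma rho_nonneg (t : ℝ) : 0 ≤ rho t := by
  unfold rho
  apply Real.log_nonneg
  nlinarith [Real.exp_pos t]

lemma rho_le (t : ℝ) : rho t ≤ Real.log 2 + |t| := by
  unfold rho
  have h1 : (1:ℝ) + Real.exp t ≤ 2 * Real.exp |t| := by
    have h2 : Real.exp t ≤ Real.exp |t| := Real.exp_le_exp.2 (le_abs_self t)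
    have h3 : (1:ℝ) ≤ Real.exp |t| := Real.one_le_exp (abs_nonneg t)
    linarith
  calc Real.log (1 + Real.exp t) ≤ Real.log (2 * Real.exp |t|) :=
        Real.log_le_log (by positivity) h1
    _ = Real.log 2 + |t| := by rw [Real.log_mul (by norm_num) (Real.exp_ne_zero _), Real.log_exp]

lemma rho_le_exp (t : ℝ) : rho t ≤ Real.exp t := by
  unfold rho
  calc Real.log (1 + Real.exp t) ≤ (1 + Real.exp t) - 1 :=
        Real.log_le_sub_one_of_pos (one_add_exp_pos t)
    _ = Real.exp t := by ring

lemma rho_hasDerivAt (t : ℝ) : HasDerivAt rho (rho' t) t := by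
  have h : HasDerivAt (fun t : ℝ => 1 + Real.exp t) (Real.exp t) t :=
    (Real.hasDerivAt_exp t).const_add 1
  have := h.log (ne_of_gt (one_add_exp_pos t))
  exact this

lemma rho'_nonneg (t : ℝ) : 0 ≤ rho' t := by
  unfold rho'; positivity

lemma rho'_le_one (t : ℝ) : rho' t ≤ 1 := by
  unfold rho'
  rw [div_le_one (one_add_exp_pos t)]
  linarith

lemma rho_lipschitz : LipschitzWith 1 rho := by
  apply lipschitzWith_of_nnnorm_deriv_le (fun t => (rho_hasDerivAt t).differentiableAt)
  intro t
  rw [(rho_hasDerivAt t).deriv]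
  rw [← NNReal.coe_le_coe, coe_nnnorm, NNReal.coe_one, Real.norm_eq_abs,
    abs_of_nonneg (rho'_nonneg t)]
  exact rho'_le_one t

lemma rho_lip_bound (a b : ℝ) : rho a ≤ rho b + |a - b| := by
  have h := rho_lipschitz.dist_le_mul a b
  rw [Real.dist_eq, Real.dist_eq, NNReal.coe_one, one_mul] at h
  have := (abs_sub_le_iff.mp h).1
  linarith

lemma rho'_hasDerivAt (t : ℝ) :
    HasDerivAt rho' (Real.exp t / (1 + Real.exp t) ^ 2) t := by
  have h1 : HasDerivAt (fun t : ℝ => 1 + Real.exp t) (Real.exp t) t :=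
    (Real.hasDerivAt_exp t).const_add 1
  have h := (Real.hasDerivAt_exp t).div h1 (ne_of_gt (one_add_exp_pos t))
  exact h.congr_deriv (by ring)

lemma rho_continuous : Continuous rho :=
  (continuous_const.add Real.continuous_exp).log fun x => ne_of_gt (one_add_exp_pos x)

lemma rho'_continuous : Continuous rho' :=
  Real.continuous_exp.div (continuous_const.add Real.continuous_exp)
    fun x => ne_of_gt (one_add_exp_pos x)

lemma rho_convex : ConvexOn ℝ univ rho := by
  have hd : deriv rho = rho' := funext fun t => (rho_hasDerivAt t).deriv
  apply convexOn_of_deriv2_nonneg convex_univ rho_continuous.continuousOn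
  · intro x _
    exact (rho_hasDerivAt x).differentiableAt.differentiableWithinAt
  · rw [hd]
    intro x _
    exact (rho'_hasDerivAt x).differentiableAt.differentiableWithinAt
  · intro x _
    have : deriv (deriv rho) x = Real.exp x / (1 + Real.exp x) ^ 2 := by
      rw [hd, (rho'_hasDerivAt x).deriv]
    simp only [Function.iterate_succ, Function.iterate_zero, Function.comp_apply, id_eq]
    rw [this]
    positivity

/-! ### The Moreau-type envelope -/

def env (y γ v : ℝ) : ℝ := ⨅ u : ℝ, (rho (-(y * u)) + γ / 2 * (u - v) ^ 2)

lemma env_bddBelow (y γ v : ℝ) (hγ : 0 ≤ γ) :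
    BddBelow (range fun u : ℝ => rho (-(y * u)) + γ / 2 * (u - v) ^ 2) := by
  refine ⟨0, ?_⟩
  rintro x ⟨u, rfl⟩
  have := rho_nonneg (-(y * u))
  positivity

lemma env_nonneg (y γ v : ℝ) (hγ : 0 ≤ γ) : 0 ≤ env y γ v := by
  apply le_ciInf
  intro u
  have := rho_nonneg (-(y * u))
  positivity

lemma env_le (y γ v : ℝ) (hγ : 0 ≤ γ) : env y γ v ≤ rho (-(y * v)) := by
  have h := ciInf_le (env_bddBelow y γ v hγ) v
  simpa [env] using h

lemma env_lip (y γ v w : ℝ) (hy : |y| ≤ 1) (hγ : 0 ≤ γ) :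
    env y γ v ≤ env y γ w + |v - w| := by
  have key : ∀ u : ℝ, env y γ v - |v - w| ≤ rho (-(y * u)) + γ / 2 * (u - w) ^ 2 := by
    intro u
    have h1 : env y γ v ≤ rho (-(y * (u + (v - w)))) + γ / 2 * ((u + (v - w)) - v) ^ 2 :=
      ciInf_le (env_bddBelow y γ v hγ) _
    have h2 : rho (-(y * (u + (v - w)))) ≤ rho (-(y * u)) + |v - w| := by
      have := rho_lip_bound (-(y * (u + (v - w)))) (-(y * u))
      have habs : |(-(y * (u + (v - w)))) - (-(y * u))| ≤ |v - w| := by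
        have : (-(y * (u + (v - w)))) - (-(y * u)) = -(y * (v - w)) := by ring
        rw [this, abs_neg, abs_mul]
        calc |y| * |v - w| ≤ 1 * |v - w| := by
              apply mul_le_mul_of_nonneg_right hy (abs_nonneg _)
          _ = |v - w| := one_mul _
      linarith
    have h3 : ((u + (v - w)) - v) ^ 2 = (u - w) ^ 2 := by ring
    rw [h3] at h1
    linarith
  have := le_ciInf key
  have heq : env y γ w = ⨅ u : ℝ, (rho (-(y * u)) + γ / 2 * (u - w) ^ 2) := rfl
  rw [heq]
  linarith

lemma env_continuous (y γ : ℝ) (hy : |y| ≤ 1) (hγ : 0 ≤ γ) : Continuous (env y γ) := by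
  have : LipschitzWith 1 (env y γ) := by
    apply LipschitzWith.of_dist_le_mul
    intro v w
    rw [Real.dist_eq, Real.dist_eq, NNReal.coe_one, one_mul]
    rw [abs_sub_le_iff]
    constructor
    · have := env_lip y γ v w hy hγ; linarith
    · have := env_lip y γ w v hy hγ
      rw [abs_sub_comm] at this; linarith
  exact this.continuous

lemma env_zero (y : ℝ) (hy : y ≠ 0) (v : ℝ) : env y 0 v = 0 := by
  refine le_antisymm ?_ (env_nonneg y 0 v le_rfl)
  apply le_of_forall_pos_le_add
  intro ε hε
  have hle : env y 0 v ≤ rho (-(y * (-(Real.log ε - 1) / y)))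
      + 0 / 2 * ((-(Real.log ε - 1) / y) - v) ^ 2 :=
    ciInf_le (env_bddBelow y 0 v le_rfl) _
  have harg : -(y * (-(Real.log ε - 1) / y)) = Real.log ε - 1 := by
    field_simp
  rw [harg] at hle
  have h2 : rho (Real.log ε - 1) ≤ Real.exp (Real.log ε - 1) := rho_le_exp _
  have h3 : Real.exp (Real.log ε - 1) = ε * Real.exp (-1) := by
    rw [Real.exp_sub, Real.exp_log hε]
    ring_nf
    rw [Real.exp_neg]
  have h4 : ε * Real.exp (-1) < ε := by
    nlinarith [Real.exp_lt_one_iff.2 (by norm_num : (-1:ℝ) < 0), hε]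
  simp only [zero_div, zero_mul, add_zero] at hle
  linarith

lemma persp (γ γ₀ γ₁ θ μ w₀ w₁ : ℝ) (h₀ : 0 < γ₀) (h₁ : 0 < γ₁) (hθ : 0 ≤ θ) (hμ : 0 ≤ μ)
    (hs : θ + μ = 1) (ht : γ * (θ * γ₁ + μ * γ₀) = γ₀ * γ₁) :
    γ * (θ * w₀ + μ * w₁) ^ 2 ≤ θ * γ₀ * w₀ ^ 2 + μ * γ₁ * w₁ ^ 2 := by
  have hpos : 0 < θ * γ₁ + μ * γ₀ := by
    rcases lt_or_ge 0 θ with h | h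
    · have : 0 ≤ μ * γ₀ := mul_nonneg hμ h₀.le
      nlinarith
    · have hθ0 : θ = 0 := le_antisymm h hθ
      have : μ = 1 := by linarith
      nlinarith
  rw [← mul_le_mul_iff_of_pos_right hpos]
  calc γ * (θ * w₀ + μ * w₁) ^ 2 * (θ * γ₁ + μ * γ₀)
      = (γ * (θ * γ₁ + μ * γ₀)) * (θ * w₀ + μ * w₁) ^ 2 := by ring
    _ = γ₀ * γ₁ * (θ * w₀ + μ * w₁) ^ 2 := by rw [ht]
    _ ≤ (θ * γ₀ * w₀ ^ 2 + μ * γ₁ * w₁ ^ 2) * (θ * γ₁ + μ * γ₀) := by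
        nlinarith [sq_nonneg (γ₀ * w₀ - γ₁ * w₁), mul_nonneg hθ hμ, mul_pos h₀ h₁]

lemma env_combo (y : ℝ) (γ γ₀ γ₁ θ μ v₀ v₁ : ℝ) (hγ : 0 < γ) (h₀ : 0 < γ₀) (h₁ : 0 < γ₁)
    (hθ : 0 ≤ θ) (hμ : 0 ≤ μ) (hs : θ + μ = 1) (ht : γ * (θ * γ₁ + μ * γ₀) = γ₀ * γ₁) :
    env y γ (θ * v₀ + μ * v₁) ≤ θ * env y γ₀ v₀ + μ * env y γ₁ v₁ := by
  apply le_of_forall_pos_le_add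
  intro ε hε
  obtain ⟨u₀, hu₀⟩ : ∃ u : ℝ, rho (-(y * u)) + γ₀ / 2 * (u - v₀) ^ 2 < env y γ₀ v₀ + ε :=
    exists_lt_of_ciInf_lt (by linarith : env y γ₀ v₀ < env y γ₀ v₀ + ε)
  obtain ⟨u₁, hu₁⟩ : ∃ u : ℝ, rho (-(y * u)) + γ₁ / 2 * (u - v₁) ^ 2 < env y γ₁ v₁ + ε :=
    exists_lt_of_ciInf_lt (by linarith : env y γ₁ v₁ < env y γ₁ v₁ + ε)
  have h1 : env y γ (θ * v₀ + μ * v₁) ≤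
      rho (-(y * (θ * u₀ + μ * u₁))) + γ / 2 * ((θ * u₀ + μ * u₁) - (θ * v₀ + μ * v₁)) ^ 2 :=
    ciInf_le (env_bddBelow y γ _ hγ.le) _
  have h2 : rho (-(y * (θ * u₀ + μ * u₁))) ≤ θ * rho (-(y * u₀)) + μ * rho (-(y * u₁)) := by
    have := rho_convex.2 (mem_univ (-(y * u₀))) (mem_univ (-(y * u₁))) hθ hμ hs
    simp only [smul_eq_mul] at this
    have harg : -(y * (θ * u₀ + μ * u₁)) = θ * (-(y * u₀)) + μ * (-(y * u₁)) := by ring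
    rw [harg]
    exact this
  have h3 : γ / 2 * ((θ * u₀ + μ * u₁) - (θ * v₀ + μ * v₁)) ^ 2 ≤
      θ * (γ₀ / 2) * (u₀ - v₀) ^ 2 + μ * (γ₁ / 2) * (u₁ - v₁) ^ 2 := by
    have := persp γ γ₀ γ₁ θ μ (u₀ - v₀) (u₁ - v₁) h₀ h₁ hθ hμ hs ht
    have harg : (θ * u₀ + μ * u₁) - (θ * v₀ + μ * v₁) = θ * (u₀ - v₀) + μ * (u₁ - v₁) := by ring
    rw [harg]
    linarith
  have hθε : θ * (env y γ₀ v₀ + ε) + μ * (env y γ₁ v₁ + ε)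
      = θ * env y γ₀ v₀ + μ * env y γ₁ v₁ + ε := by
    have : θ * ε + μ * ε = ε := by rw [← add_mul, hs, one_mul]
    ring_nf
    nlinarith [this]
  nlinarith [mul_le_mul_of_nonneg_left hu₀.le hθ, mul_le_mul_of_nonneg_left hu₁.le hμ]

/-! ### Integration infrastructure -/

instance : IsProbabilityMeasure stdGauss := by
  unfold stdGauss; infer_instance

lemma integrable_abs_stdGauss : Integrable (fun x : ℝ => |x|) stdGauss := by
  have h1 : stdGauss = volume.withDensity (gaussianPDF 0 1) := by
    rw [stdGauss, gaussianReal_of_var_ne_zero 0 one_ne_zero]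
  rw [h1, integrable_withDensity_iff (measurable_gaussianPDF 0 1)
    (ae_of_all _ fun x => ENNReal.ofReal_lt_top)]
  have h2 : (fun x : ℝ => |x| * (gaussianPDF 0 1 x).toReal)
      = fun x => (√(2 * π))⁻¹ * |x * Real.exp (-(1/2) * x ^ 2)| := by
    ext x
    rw [gaussianPDF, ENNReal.toReal_ofReal (gaussianPDFReal_nonneg 0 1 x), gaussianPDFReal]
    rw [abs_mul, abs_of_pos (Real.exp_pos _)]
    push_cast
    rw [mul_one, sub_zero]
    ring_nf
  rw [h2]
  exact ((integrable_mul_exp_neg_mul_sq (by norm_num : (0:ℝ) < 1/2)).abs).const_mul _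

lemma integrable_affine_abs (c d : ℝ) :
    Integrable (fun x : ℝ => c + d * |x|) stdGauss :=
  (integrable_const c).add ((integrable_abs_stdGauss.const_mul d))

lemma qfun_integrand_integrable (a b : ℝ) :
    Integrable (fun g : ℝ => rho' (a + b * g)) stdGauss := by
  refine Integrable.mono' (integrable_const 1) ?_ (ae_of_all _ fun g => ?_)
  · exact ((rho'_continuous.comp (continuous_const.add
      (continuous_const.mul continuous_id))).aestronglyMeasurable)
  · rw [Real.norm_eq_abs, abs_of_nonneg (rho'_nonneg _)]
    exact rho'_le_one _

lemma qfun_nonneg (αc α₂ R z : ℝ) : 0 ≤ qfun αc α₂ R z :=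
  integral_nonneg fun g => rho'_nonneg _

lemma qfun_le_one (αc α₂ R z : ℝ) : qfun αc α₂ R z ≤ 1 := by
  unfold qfun
  calc ∫ g, rho' ((αc / Real.sqrt α₂) * R * z + Real.sqrt (1 - αc ^ 2 / α₂) * R * g) ∂stdGauss
      ≤ ∫ _, (1:ℝ) ∂stdGauss := by
        apply integral_mono (qfun_integrand_integrable _ _) (integrable_const 1)
        intro g
        exact rho'_le_one _
    _ = 1 := by simp

lemma qfun_continuous (αc α₂ R : ℝ) : Continuous (qfun αc α₂ R) := by
  apply continuous_of_dominated (F := fun z g =>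
    rho' ((αc / Real.sqrt α₂) * R * z + Real.sqrt (1 - αc ^ 2 / α₂) * R * g))
    (bound := fun _ => (1:ℝ))
  · intro z
    exact (qfun_integrand_integrable _ _).aestronglyMeasurable
  · intro z
    refine ae_of_all _ fun g => ?_
    rw [Real.norm_eq_abs, abs_of_nonneg (rho'_nonneg _)]
    exact rho'_le_one _
  · exact integrable_const 1
  · refine ae_of_all _ fun g => ?_
    exact rho'_continuous.comp ((continuous_const.mul continuous_id).add continuous_const)

/-- The inner integrand of `Eexp` for the envelope functions. -/
def igrand (αc α₂ R σ ξ γ z₁ z₂ : ℝ) : ℝ :=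
  qfun αc α₂ R z₁ * env 1 γ (Vfun α₂ R σ ξ z₁ z₂)
    + (1 - qfun αc α₂ R z₁) * env (-1) γ (Vfun α₂ R σ ξ z₁ z₂)

lemma igrand_nonneg (αc α₂ R σ ξ γ : ℝ) (hγ : 0 ≤ γ) (z₁ z₂ : ℝ) :
    0 ≤ igrand αc α₂ R σ ξ γ z₁ z₂ := by
  unfold igrand
  have h1 := qfun_nonneg αc α₂ R z₁
  have h2 := qfun_le_one αc α₂ R z₁
  have h3 := env_nonneg 1 γ (Vfun α₂ R σ ξ z₁ z₂) hγ
  have h4 := env_nonneg (-1) γ (Vfun α₂ R σ ξ z₁ z₂) hγ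
  nlinarith

lemma Vfun_abs_le (α₂ R σ ξ z₁ z₂ : ℝ) :
    |Vfun α₂ R σ ξ z₁ z₂| ≤ |ξ * R * Real.sqrt α₂| * |z₁| + |σ * Real.sqrt α₂| * |z₂| := by
  unfold Vfun
  calc |ξ * R * Real.sqrt α₂ * z₁ + σ * Real.sqrt α₂ * z₂|
      ≤ |ξ * R * Real.sqrt α₂ * z₁| + |σ * Real.sqrt α₂ * z₂| := abs_add_le _ _
    _ = |ξ * R * Real.sqrt α₂| * |z₁| + |σ * Real.sqrt α₂| * |z₂| := by
        rw [abs_mul (ξ * R * Real.sqrt α₂), abs_mul (σ * Real.sqrt α₂)]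

lemma igrand_le (αc α₂ R σ ξ γ : ℝ) (hγ : 0 ≤ γ) (z₁ z₂ : ℝ) :
    igrand αc α₂ R σ ξ γ z₁ z₂
      ≤ Real.log 2 + (|ξ * R * Real.sqrt α₂| * |z₁| + |σ * Real.sqrt α₂| * |z₂|) := by
  set v := Vfun α₂ R σ ξ z₁ z₂ with hv
  have h1 := qfun_nonneg αc α₂ R z₁
  have h2 := qfun_le_one αc α₂ R z₁
  have e1 : env 1 γ v ≤ Real.log 2 + |v| := by
    refine le_trans (env_le 1 γ v hγ) (le_trans (rho_le _) ?_)
    simp [abs_neg]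
  have e2 : env (-1) γ v ≤ Real.log 2 + |v| := by
    refine le_trans (env_le (-1) γ v hγ) (le_trans (rho_le _) ?_)
    simp [abs_neg]
  have e3 : igrand αc α₂ R σ ξ γ z₁ z₂ ≤ Real.log 2 + |v| := by
    unfold igrand
    rw [← hv]
    have h3 := env_nonneg 1 γ v hγ
    have h4 := env_nonneg (-1) γ v hγ
    nlinarith
  have := Vfun_abs_le α₂ R σ ξ z₁ z₂
  rw [← hv] at this
  linarith

lemma igrand_continuous (αc α₂ R σ ξ γ : ℝ) (hγ : 0 ≤ γ) :
    Continuous (fun p : ℝ × ℝ => igrand αc α₂ R σ ξ γ p.1 p.2) := by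
  unfold igrand
  have hV : Continuous (fun p : ℝ × ℝ => Vfun α₂ R σ ξ p.1 p.2) := by
    unfold Vfun
    fun_prop
  have h1 : Continuous (fun p : ℝ × ℝ => qfun αc α₂ R p.1) :=
    (qfun_continuous αc α₂ R).comp continuous_fst
  have h2 := (env_continuous 1 γ (by norm_num) hγ).comp hV
  have h3 := (env_continuous (-1) γ (by norm_num) hγ).comp hV
  fun_prop

lemma igrand_integrable_inner (αc α₂ R σ ξ γ : ℝ) (hγ : 0 ≤ γ) (z₁ : ℝ) :
    Integrable (fun z₂ => igrand αc α₂ R σ ξ γ z₁ z₂) stdGauss := by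
  refine Integrable.mono' (integrable_affine_abs
    (Real.log 2 + |ξ * R * Real.sqrt α₂| * |z₁|) |σ * Real.sqrt α₂|) ?_
    (ae_of_all _ fun z₂ => ?_)
  · exact ((igrand_continuous αc α₂ R σ ξ γ hγ).comp
      (Continuous.prodMk_right z₁)).aestronglyMeasurable
  · rw [Real.norm_eq_abs, abs_of_nonneg (igrand_nonneg αc α₂ R σ ξ γ hγ z₁ z₂)]
    have := igrand_le αc α₂ R σ ξ γ hγ z₁ z₂
    linarith

/-- The inner integral. -/
def Jfun (αc α₂ R σ ξ γ : ℝ) (z₁ : ℝ) : ℝ := ∫ z₂, igrand αc α₂ R σ ξ γ z₁ z₂ ∂stdGauss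

lemma Jfun_nonneg (αc α₂ R σ ξ γ : ℝ) (hγ : 0 ≤ γ) (z₁ : ℝ) :
    0 ≤ Jfun αc α₂ R σ ξ γ z₁ :=
  integral_nonneg (igrand_nonneg αc α₂ R σ ξ γ hγ z₁)

lemma Jfun_le (αc α₂ R σ ξ γ : ℝ) (hγ : 0 ≤ γ) (z₁ : ℝ) :
    Jfun αc α₂ R σ ξ γ z₁ ≤ (Real.log 2 + |σ * Real.sqrt α₂| * (∫ x, |x| ∂stdGauss))
      + |ξ * R * Real.sqrt α₂| * |z₁| := by
  unfold Jfun
  have hint : Integrable (fun z₂ : ℝ => (Real.log 2 + |ξ * R * Real.sqrt α₂| * |z₁|)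
      + |σ * Real.sqrt α₂| * |z₂|) stdGauss := integrable_affine_abs _ _
  calc ∫ z₂, igrand αc α₂ R σ ξ γ z₁ z₂ ∂stdGauss
      ≤ ∫ z₂, ((Real.log 2 + |ξ * R * Real.sqrt α₂| * |z₁|)
          + |σ * Real.sqrt α₂| * |z₂|) ∂stdGauss := by
        refine integral_mono_of_nonneg (ae_of_all _ (igrand_nonneg αc α₂ R σ ξ γ hγ z₁)) hint
          (ae_of_all _ fun z₂ => ?_)
        dsimp only
        have := igrand_le αc α₂ R σ ξ γ hγ z₁ z₂
        linarith
    _ = (Real.log 2 + |ξ * R * Real.sqrt α₂| * |z₁|)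
          + |σ * Real.sqrt α₂| * (∫ x, |x| ∂stdGauss) := by
        rw [integral_add (integrable_const _) (integrable_abs_stdGauss.const_mul _)]
        rw [integral_const, integral_const_mul]
        simp
    _ = _ := by ring

lemma Jfun_aestronglyMeasurable (αc α₂ R σ ξ γ : ℝ) (hγ : 0 ≤ γ) :
    AEStronglyMeasurable (Jfun αc α₂ R σ ξ γ) stdGauss := by
  have h := (igrand_continuous αc α₂ R σ ξ γ hγ).stronglyMeasurable
  exact (h.integral_prod_right' (ν := stdGauss)).aestronglyMeasurable

lemma Jfun_integrable (αc α₂ R σ ξ γ : ℝ) (hγ : 0 ≤ γ) :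
    Integrable (Jfun αc α₂ R σ ξ γ) stdGauss := by
  refine Integrable.mono' (integrable_affine_abs
    (Real.log 2 + |σ * Real.sqrt α₂| * (∫ x, |x| ∂stdGauss)) |ξ * R * Real.sqrt α₂|)
    (Jfun_aestronglyMeasurable αc α₂ R σ ξ γ hγ) (ae_of_all _ fun z₁ => ?_)
  rw [Real.norm_eq_abs, abs_of_nonneg (Jfun_nonneg αc α₂ R σ ξ γ hγ z₁)]
  exact Jfun_le αc α₂ R σ ξ γ hγ z₁

/-! ### Rewriting the asymptotic loss -/

lemma Lasym_eq (lam δ αc α₂ R σ ξ γ : ℝ) :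
    Lasym lam δ αc α₂ R σ ξ γ = lam * (σ ^ 2 + ξ ^ 2 * R ^ 2) / 2 - α₂ * γ * σ ^ 2 / (2 * δ)
      + ∫ z₁, Jfun αc α₂ R σ ξ γ z₁ ∂stdGauss := rfl

lemma Lasym_zero (lam δ αc α₂ R σ ξ : ℝ) :
    Lasym lam δ αc α₂ R σ ξ 0 = lam * (σ ^ 2 + ξ ^ 2 * R ^ 2) / 2 := by
  rw [Lasym_eq]
  have h : ∀ z₁, Jfun αc α₂ R σ ξ 0 z₁ = 0 := by
    intro z₁
    unfold Jfun igrand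
    simp [env_zero 1 one_ne_zero, env_zero (-1) (by norm_num : (-1:ℝ) ≠ 0)]
  simp [h]

lemma intJ_le (αc α₂ R σ ξ γ : ℝ) (hγ : 0 ≤ γ) :
    ∫ z₁, Jfun αc α₂ R σ ξ γ z₁ ∂stdGauss
      ≤ (Real.log 2 + |σ * Real.sqrt α₂| * (∫ x, |x| ∂stdGauss))
        + |ξ * R * Real.sqrt α₂| * (∫ x, |x| ∂stdGauss) := by
  calc ∫ z₁, Jfun αc α₂ R σ ξ γ z₁ ∂stdGauss
      ≤ ∫ z₁, ((Real.log 2 + |σ * Real.sqrt α₂| * (∫ x, |x| ∂stdGauss))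
          + |ξ * R * Real.sqrt α₂| * |z₁|) ∂stdGauss := by
        refine integral_mono_of_nonneg (ae_of_all _ (Jfun_nonneg αc α₂ R σ ξ γ hγ))
          (integrable_affine_abs _ _) (ae_of_all _ fun z₁ => ?_)
        exact Jfun_le αc α₂ R σ ξ γ hγ z₁
    _ = _ := by
        rw [integral_add (integrable_const _) (integrable_abs_stdGauss.const_mul _),
          integral_const, integral_const_mul]
        simp

lemma lasym_bddAbove (lam δ αc α₂ R σ ξ : ℝ) (hδ : 0 < δ) (hα₂ : 0 ≤ α₂) :
    BddAbove (range fun γ : Ici (0:ℝ) => Lasym lam δ αc α₂ R σ ξ ↑γ) := by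
  refine ⟨lam * (σ ^ 2 + ξ ^ 2 * R ^ 2) / 2
    + ((Real.log 2 + |σ * Real.sqrt α₂| * (∫ x, |x| ∂stdGauss))
      + |ξ * R * Real.sqrt α₂| * (∫ x, |x| ∂stdGauss)), ?_⟩
  rintro x ⟨⟨γ, hγ⟩, rfl⟩
  simp only
  rw [Lasym_eq]
  have hγ' : (0:ℝ) ≤ γ := hγ
  have h1 : 0 ≤ α₂ * γ * σ ^ 2 / (2 * δ) := by
    exact div_nonneg (mul_nonneg (mul_nonneg hα₂ hγ') (sq_nonneg σ)) (by linarith)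
  have h2 := intJ_le αc α₂ R σ ξ γ hγ'
  linarith

lemma igrand_combo (αc α₂ R : ℝ) (σ₀ ξ₀ σ₁ ξ₁ γ γ₀ γ₁ θ μ : ℝ)
    (hγ : 0 < γ) (h₀ : 0 < γ₀) (h₁ : 0 < γ₁) (hθ : 0 ≤ θ) (hμ : 0 ≤ μ) (hs : θ + μ = 1)
    (ht : γ * (θ * γ₁ + μ * γ₀) = γ₀ * γ₁) (z₁ z₂ : ℝ) :
    igrand αc α₂ R (θ * σ₀ + μ * σ₁) (θ * ξ₀ + μ * ξ₁) γ z₁ z₂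
      ≤ θ * igrand αc α₂ R σ₀ ξ₀ γ₀ z₁ z₂ + μ * igrand αc α₂ R σ₁ ξ₁ γ₁ z₁ z₂ := by
  have hV : Vfun α₂ R (θ * σ₀ + μ * σ₁) (θ * ξ₀ + μ * ξ₁) z₁ z₂
      = θ * Vfun α₂ R σ₀ ξ₀ z₁ z₂ + μ * Vfun α₂ R σ₁ ξ₁ z₁ z₂ := by
    unfold Vfun; ring
  have e1 := env_combo 1 γ γ₀ γ₁ θ μ (Vfun α₂ R σ₀ ξ₀ z₁ z₂) (Vfun α₂ R σ₁ ξ₁ z₁ z₂)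
    hγ h₀ h₁ hθ hμ hs ht
  have e2 := env_combo (-1) γ γ₀ γ₁ θ μ (Vfun α₂ R σ₀ ξ₀ z₁ z₂) (Vfun α₂ R σ₁ ξ₁ z₁ z₂)
    hγ h₀ h₁ hθ hμ hs ht
  have hq0 := qfun_nonneg αc α₂ R z₁
  have hq1 := qfun_le_one αc α₂ R z₁
  unfold igrand
  rw [hV]
  nlinarith [mul_le_mul_of_nonneg_left e1 hq0,
    mul_le_mul_of_nonneg_left e2 (by linarith : (0:ℝ) ≤ 1 - qfun αc α₂ R z₁)]

lemma intJ_combo (αc α₂ R : ℝ) (σ₀ ξ₀ σ₁ ξ₁ γ γ₀ γ₁ θ μ : ℝ)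
    (hγ : 0 ≤ γ) (h₀ : 0 ≤ γ₀) (h₁ : 0 ≤ γ₁) (hθ : 0 ≤ θ) (hμ : 0 ≤ μ)
    (hpt : ∀ z₁ z₂, igrand αc α₂ R (θ * σ₀ + μ * σ₁) (θ * ξ₀ + μ * ξ₁) γ z₁ z₂
      ≤ θ * igrand αc α₂ R σ₀ ξ₀ γ₀ z₁ z₂ + μ * igrand αc α₂ R σ₁ ξ₁ γ₁ z₁ z₂) :
    ∫ z₁, Jfun αc α₂ R (θ * σ₀ + μ * σ₁) (θ * ξ₀ + μ * ξ₁) γ z₁ ∂stdGauss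
      ≤ θ * ∫ z₁, Jfun αc α₂ R σ₀ ξ₀ γ₀ z₁ ∂stdGauss
        + μ * ∫ z₁, Jfun αc α₂ R σ₁ ξ₁ γ₁ z₁ ∂stdGauss := by
  have hJ : ∀ z₁, Jfun αc α₂ R (θ * σ₀ + μ * σ₁) (θ * ξ₀ + μ * ξ₁) γ z₁
      ≤ θ * Jfun αc α₂ R σ₀ ξ₀ γ₀ z₁ + μ * Jfun αc α₂ R σ₁ ξ₁ γ₁ z₁ := by
    intro z₁
    unfold Jfun
    calc ∫ z₂, igrand αc α₂ R (θ * σ₀ + μ * σ₁) (θ * ξ₀ + μ * ξ₁) γ z₁ z₂ ∂stdGauss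
        ≤ ∫ z₂, (θ * igrand αc α₂ R σ₀ ξ₀ γ₀ z₁ z₂
            + μ * igrand αc α₂ R σ₁ ξ₁ γ₁ z₁ z₂) ∂stdGauss := by
          refine integral_mono_of_nonneg
            (ae_of_all _ (igrand_nonneg αc α₂ R _ _ γ hγ z₁))
            (((igrand_integrable_inner αc α₂ R σ₀ ξ₀ γ₀ h₀ z₁).const_mul θ).add
              ((igrand_integrable_inner αc α₂ R σ₁ ξ₁ γ₁ h₁ z₁).const_mul μ))
            (ae_of_all _ fun z₂ => hpt z₁ z₂)
      _ = θ * ∫ z₂, igrand αc α₂ R σ₀ ξ₀ γ₀ z₁ z₂ ∂stdGauss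
            + μ * ∫ z₂, igrand αc α₂ R σ₁ ξ₁ γ₁ z₁ z₂ ∂stdGauss := by
          rw [integral_add ((igrand_integrable_inner αc α₂ R σ₀ ξ₀ γ₀ h₀ z₁).const_mul θ)
            ((igrand_integrable_inner αc α₂ R σ₁ ξ₁ γ₁ h₁ z₁).const_mul μ),
            integral_const_mul, integral_const_mul]
  calc ∫ z₁, Jfun αc α₂ R (θ * σ₀ + μ * σ₁) (θ * ξ₀ + μ * ξ₁) γ z₁ ∂stdGauss
      ≤ ∫ z₁, (θ * Jfun αc α₂ R σ₀ ξ₀ γ₀ z₁ + μ * Jfun αc α₂ R σ₁ ξ₁ γ₁ z₁) ∂stdGauss := by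
        refine integral_mono_of_nonneg (ae_of_all _ (Jfun_nonneg αc α₂ R _ _ γ hγ))
          (((Jfun_integrable αc α₂ R σ₀ ξ₀ γ₀ h₀).const_mul θ).add
            ((Jfun_integrable αc α₂ R σ₁ ξ₁ γ₁ h₁).const_mul μ))
          (ae_of_all _ hJ)
    _ = _ := by
        rw [integral_add ((Jfun_integrable αc α₂ R σ₀ ξ₀ γ₀ h₀).const_mul θ)
          ((Jfun_integrable αc α₂ R σ₁ ξ₁ γ₁ h₁).const_mul μ),
          integral_const_mul, integral_const_mul]

lemma quad_combo (lam R c σ₀ ξ₀ σ₁ ξ₁ θ μ : ℝ) (hθ : 0 ≤ θ) (hμ : 0 ≤ μ) (hs : θ + μ = 1)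
    (h1 : c ≤ lam) (h2 : c ≤ lam * R ^ 2) :
    lam * ((θ * σ₀ + μ * σ₁) ^ 2 + (θ * ξ₀ + μ * ξ₁) ^ 2 * R ^ 2) / 2
        - c / 2 * ((θ * σ₀ + μ * σ₁) ^ 2 + (θ * ξ₀ + μ * ξ₁) ^ 2)
      ≤ θ * (lam * (σ₀ ^ 2 + ξ₀ ^ 2 * R ^ 2) / 2 - c / 2 * (σ₀ ^ 2 + ξ₀ ^ 2))
        + μ * (lam * (σ₁ ^ 2 + ξ₁ ^ 2 * R ^ 2) / 2 - c / 2 * (σ₁ ^ 2 + ξ₁ ^ 2)) := by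
  have hμθ : μ = 1 - θ := by linarith
  subst hμθ
  nlinarith [mul_nonneg (mul_nonneg (sub_nonneg.2 h1) (mul_nonneg hθ hμ)) (sq_nonneg (σ₀ - σ₁)),
    mul_nonneg (mul_nonneg (sub_nonneg.2 h2) (mul_nonneg hθ hμ)) (sq_nonneg (ξ₀ - ξ₁))]

lemma le_of_forall_eps (x yy C : ℝ) (hC : 0 ≤ C) (h : ∀ ε > 0, x ≤ yy + C * ε) : x ≤ yy := by
  apply le_of_forall_pos_le_add
  intro ε' hε'
  have := h (ε' / (C + 1)) (by positivity)
  have h2 : C * (ε' / (C + 1)) ≤ ε' := by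
    rw [mul_div_assoc']
    rw [div_le_iff₀ (by linarith)]
    nlinarith
  linarith

lemma money (α₂ δ γ γ₀ γ₁ σ₀ σ₁ a b ε : ℝ) (hδ : 0 < δ) (hα₂ : 0 ≤ α₂)
    (hK2 : a * γ₀ * σ₀ ^ 2 + b * γ₁ * σ₁ ^ 2
      ≤ γ * (a * σ₀ + b * σ₁) ^ 2 + γ * ε * (a * σ₀ + b * σ₁)) :
    -(α₂ * γ * (a * σ₀ + b * σ₁) ^ 2 / (2 * δ))
      ≤ -(a * (α₂ * γ₀ * σ₀ ^ 2 / (2 * δ)) + b * (α₂ * γ₁ * σ₁ ^ 2 / (2 * δ)))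
        + α₂ * γ * (a * σ₀ + b * σ₁) / (2 * δ) * ε := by
  have hD : 0 ≤ α₂ / (2 * δ) := div_nonneg hα₂ (by linarith)
  have h := mul_le_mul_of_nonneg_left hK2 hD
  have e1 : α₂ / (2 * δ) * (a * γ₀ * σ₀ ^ 2 + b * γ₁ * σ₁ ^ 2)
      = a * (α₂ * γ₀ * σ₀ ^ 2 / (2 * δ)) + b * (α₂ * γ₁ * σ₁ ^ 2 / (2 * δ)) := by
    field_simp
  have e2 : α₂ / (2 * δ) * (γ * (a * σ₀ + b * σ₁) ^ 2 + γ * ε * (a * σ₀ + b * σ₁))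
      = α₂ * γ * (a * σ₀ + b * σ₁) ^ 2 / (2 * δ)
        + α₂ * γ * (a * σ₀ + b * σ₁) / (2 * δ) * ε := by
    field_simp
  rw [e1, e2] at h
  linarith

set_option maxHeartbeats 1000000 in

/-- Under Assumption 1, the map
`Ψ(σ, ξ) = sup_{γ ≥ 0} L(σ, ξ, γ)` is strongly convex with modulus `λ · min(1, R²)` on
`[0, ∞) × ℝ`: the function `(σ, ξ) ↦ Ψ(σ, ξ) − (λ · min(1, R²)/2) · (σ² + ξ²)` is convex there. -/
theorem statement0 (K₁ K₂ lam δ R αc α₂ : ℝ)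
    (h1 : Assump1 K₁ K₂ δ R αc α₂) (hlam : lam ∈ Icc K₁ K₂) :
    ConvexOn ℝ ((Ici (0 : ℝ)) ×ˢ (univ : Set ℝ))
      (fun q : ℝ × ℝ =>
        (⨆ γ : Ici (0 : ℝ), Lasym lam δ αc α₂ R q.1 q.2 γ)
          - lam * min 1 (R ^ 2) / 2 * (q.1 ^ 2 + q.2 ^ 2)) := by
  obtain ⟨hK₁, hK₁₂, hδI, hRI, hαcI, hα₂I, hccs⟩ := h1
  have hδ0 : 0 < δ := lt_of_lt_of_le hK₁ hδI.1
  have hα₂0 : 0 < α₂ := lt_of_lt_of_le hK₁ hα₂I.1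
  have hlam0 : 0 < lam := lt_of_lt_of_le hK₁ hlam.1
  have hc1 : lam * min 1 (R ^ 2) ≤ lam := by
    nlinarith [min_le_left 1 (R ^ 2)]
  have hc2 : lam * min 1 (R ^ 2) ≤ lam * R ^ 2 := by
    nlinarith [min_le_right 1 (R ^ 2)]
  haveI : Nonempty (Ici (0:ℝ)) := ⟨⟨0, self_mem_Ici⟩⟩
  have hbdd : ∀ σ ξ : ℝ, BddAbove (range fun γ : Ici (0:ℝ) => Lasym lam δ αc α₂ R σ ξ ↑γ) :=
    fun σ ξ => lasym_bddAbove lam δ αc α₂ R σ ξ hδ0 hα₂0.le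
  constructor
  · exact (convex_Ici 0).prod convex_univ
  rintro ⟨σ₀, ξ₀⟩ hp ⟨σ₁, ξ₁⟩ hq a b ha hb hab
  have hσ₀ : 0 ≤ σ₀ := hp.1
  have hσ₁ : 0 ≤ σ₁ := hq.1
  simp only [Prod.smul_mk, Prod.mk_add_mk, smul_eq_mul]
  rw [sub_le_iff_le_add]
  apply ciSup_le
  rintro ⟨γ, hγ0⟩
  have hγ0' : (0:ℝ) ≤ γ := hγ0
  simp only
  have hΨ₀ : ∀ g : ℝ, 0 ≤ g → Lasym lam δ αc α₂ R σ₀ ξ₀ g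
      ≤ ⨆ γ' : Ici (0:ℝ), Lasym lam δ αc α₂ R σ₀ ξ₀ ↑γ' :=
    fun g hg => le_ciSup (hbdd σ₀ ξ₀) (⟨g, mem_Ici.mpr hg⟩ : Ici (0:ℝ))
  have hΨ₁ : ∀ g : ℝ, 0 ≤ g → Lasym lam δ αc α₂ R σ₁ ξ₁ g
      ≤ ⨆ γ' : Ici (0:ℝ), Lasym lam δ αc α₂ R σ₁ ξ₁ ↑γ' :=
    fun g hg => le_ciSup (hbdd σ₁ ξ₁) (⟨g, mem_Ici.mpr hg⟩ : Ici (0:ℝ))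
  have hqc := quad_combo lam R (lam * min 1 (R ^ 2)) σ₀ ξ₀ σ₁ ξ₁ a b ha hb hab hc1 hc2
  rcases eq_or_lt_of_le hγ0' with hγeq | hγpos
  · -- γ = 0
    rw [← hγeq, Lasym_zero]
    have h₀ := hΨ₀ 0 le_rfl
    have h₁ := hΨ₁ 0 le_rfl
    rw [Lasym_zero] at h₀ h₁
    have p₀ := mul_le_mul_of_nonneg_left h₀ ha
    have p₁ := mul_le_mul_of_nonneg_left h₁ hb
    linarith [hqc, p₀, p₁]
  · -- γ > 0
    apply le_of_forall_eps _ _ (α₂ * γ * (a * σ₀ + b * σ₁) / (2 * δ))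
    · have hσθ : 0 ≤ a * σ₀ + b * σ₁ := add_nonneg (mul_nonneg ha hσ₀) (mul_nonneg hb hσ₁)
      exact div_nonneg (mul_nonneg (mul_nonneg hα₂0.le hγ0') hσθ) (by linarith)
    intro ε hε
    have hσθ : 0 ≤ a * σ₀ + b * σ₁ := add_nonneg (mul_nonneg ha hσ₀) (mul_nonneg hb hσ₁)
    set σθ : ℝ := a * σ₀ + b * σ₁ with hσθdef
    have hd₀ : 0 < σ₀ + ε := by linarith
    have hd₁ : 0 < σ₁ + ε := by linarith
    have hdθ : 0 < σθ + ε := by linarith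
    set γ₀ : ℝ := γ * (σθ + ε) / (σ₀ + ε) with hγ₀def
    set γ₁ : ℝ := γ * (σθ + ε) / (σ₁ + ε) with hγ₁def
    have h₀pos : 0 < γ₀ := div_pos (mul_pos hγpos hdθ) hd₀
    have h₁pos : 0 < γ₁ := div_pos (mul_pos hγpos hdθ) hd₁
    have e₀ : γ₀ * (σ₀ + ε) = γ * (σθ + ε) := by
      rw [hγ₀def]; field_simp
    have e₁ : γ₁ * (σ₁ + ε) = γ * (σθ + ε) := by
      rw [hγ₁def]; field_simp
    have hsum : a * (σ₀ + ε) + b * (σ₁ + ε) = σθ + ε := by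
      rw [hσθdef]; linear_combination ε * hab
    have ht : γ * (a * γ₁ + b * γ₀) = γ₀ * γ₁ := by
      apply mul_right_cancel₀ (ne_of_gt (mul_pos hd₀ hd₁))
      linear_combination (γ * a * (σ₀ + ε)) * e₁ + (γ * b * (σ₁ + ε)) * e₀
        - (γ₁ * (σ₁ + ε)) * e₀ - (γ * (σθ + ε)) * e₁ + (γ ^ 2 * (σθ + ε)) * hsum
    have hK2 : a * γ₀ * σ₀ ^ 2 + b * γ₁ * σ₁ ^ 2 ≤ γ * σθ ^ 2 + γ * ε * σθ := by
      have k₀ : γ₀ * σ₀ ^ 2 ≤ γ * (σθ + ε) * σ₀ := by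
        rw [hγ₀def, div_mul_eq_mul_div, div_le_iff₀ hd₀]
        linarith [mul_nonneg (mul_nonneg hγ0' hdθ.le) (mul_nonneg hσ₀ hε.le)]
      have k₁ : γ₁ * σ₁ ^ 2 ≤ γ * (σθ + ε) * σ₁ := by
        rw [hγ₁def, div_mul_eq_mul_div, div_le_iff₀ hd₁]
        linarith [mul_nonneg (mul_nonneg hγ0' hdθ.le) (mul_nonneg hσ₁ hε.le)]
      have p₀ := mul_le_mul_of_nonneg_left k₀ ha
      have p₁ := mul_le_mul_of_nonneg_left k₁ hb
      have : a * (γ * (σθ + ε) * σ₀) + b * (γ * (σθ + ε) * σ₁) = γ * σθ ^ 2 + γ * ε * σθ := by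
        rw [hσθdef]; ring
      linarith [p₀, p₁, this]
    have hpt := fun z₁ z₂ => igrand_combo αc α₂ R σ₀ ξ₀ σ₁ ξ₁ γ γ₀ γ₁ a b
      hγpos h₀pos h₁pos ha hb hab ht z₁ z₂
    have hint := intJ_combo αc α₂ R σ₀ ξ₀ σ₁ ξ₁ γ γ₀ γ₁ a b hγ0' h₀pos.le h₁pos.le ha hb hpt
    have hL₀ := hΨ₀ γ₀ h₀pos.le
    have hL₁ := hΨ₁ γ₁ h₁pos.le
    rw [Lasym_eq lam δ αc α₂ R σ₀ ξ₀ γ₀] at hL₀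
    rw [Lasym_eq lam δ αc α₂ R σ₁ ξ₁ γ₁] at hL₁
    rw [Lasym_eq]
    have hM := money α₂ δ γ γ₀ γ₁ σ₀ σ₁ a b ε hδ0 hα₂0.le (by rw [← hσθdef]; exact hK2)
    rw [← hσθdef] at hM
    have pL₀ := mul_le_mul_of_nonneg_left hL₀ ha
    have pL₁ := mul_le_mul_of_nonneg_left hL₁ hb
    linarith [hqc, hint, hM, pL₀, pL₁]

end
end

section
/- Under Assumptions 1 and 2, let (X, Z) be an n×p pair of random matrices in the (α_c, α₂)-universality class, let the labels y be generated from X and θ₀ via the logistic model, let φ : ℝ² → ℝ be a 1-Lipschitz function and ψ(θ) = φ(σ(θ), ξ(θ)). There exists a constant L₁ > 0, depending only on (K₁, K₂, K₃, K₄, τ), such that with probability at least 1 − 2e^{−n}, the map λ ↦ ψ(θ̂(Z,λ)) is L₁-Lipschitz on the interval [K₁, K₂]. -/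
open MeasureTheory ProbabilityTheory Real Set
open scoped BigOperators ENNReal NNReal

noncomputable section
/-- Euclidean dot product on `Fin p → ℝ`. -/
def dotp {p : ℕ} (a b : Fin p → ℝ) : ℝ := ∑ j, a j * b j

/-- Euclidean norm on `Fin p → ℝ`. -/
def enorm2 {p : ℕ} (a : Fin p → ℝ) : ℝ := Real.sqrt (∑ j, a j ^ 2)

/-- Projection onto the span of `θ₀`. -/
def projPar {p : ℕ} (θ₀ θ : Fin p → ℝ) : Fin p → ℝ := fun j => (dotp θ θ₀ / dotp θ₀ θ₀) * θ₀ j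

/-- Projection onto the orthogonal complement of the span of `θ₀`. -/
def projPerp {p : ℕ} (θ₀ θ : Fin p → ℝ) : Fin p → ℝ := fun j => θ j - projPar θ₀ θ j

/-- `ξ(θ) = ⟨θ, θ₀⟩ / (R² p)`. -/
def xiOf {p : ℕ} (R : ℝ) (θ₀ θ : Fin p → ℝ) : ℝ := dotp θ θ₀ / (R ^ 2 * p)

/-- `σ(θ) = ‖Π⊥_{θ₀} θ‖₂ / √p`. -/
def sigmaOf {p : ℕ} (θ₀ θ : Fin p → ℝ) : ℝ := enorm2 (projPerp θ₀ θ) / Real.sqrt p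

/-- The ridge-regularized logistic loss `𝓛_n(θ; Z, λ)`. -/
def Ln {n p : ℕ} (y : Fin n → ℝ) (Z : Fin n → Fin p → ℝ) (lam : ℝ) (θ : Fin p → ℝ) : ℝ :=
  (1 / (n : ℝ)) * ∑ i, rho (-(y i * dotp (Z i) θ)) + lam / (2 * (p : ℝ)) * ∑ j, θ j ^ 2

/-- The label produced from a uniform variable `u` and linear statistic `t` in the logistic
model: `+1` if `u ≤ ρ'(t)`, `−1` otherwise. -/
def labelOf (u t : ℝ) : ℝ := if u ≤ rho' t then 1 else -1

/-- Sup norm on `Fin p → ℝ`. -/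
def supNorm {p : ℕ} (θ : Fin p → ℝ) : ℝ := ⨆ j, |θ j|

/-- The sub-Gaussian (ψ₂, Orlicz) norm `‖W‖_{ψ₂} = inf{t > 0 : E[exp(W²/t²)] ≤ 2}`. -/
def psi2 {Ω : Type*} [MeasurableSpace Ω] (μ : Measure Ω) (W : Ω → ℝ) : ℝ :=
  sInf {t : ℝ | 0 < t ∧ (∫ ω, Real.exp (W ω ^ 2 / t ^ 2) ∂μ) ≤ 2}

/-- Assumption 2 (spread): `‖θ₀‖_∞ ≤ K₄ n^{1/6 − τ}` with `0 < τ < 1/6`. -/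
def Assump2 {p : ℕ} (K₄ τ : ℝ) (n : ℕ) (θ₀ : Fin p → ℝ) : Prop :=
  0 < K₄ ∧ 0 < τ ∧ τ < 1 / 6 ∧ ∀ j, |θ₀ j| ≤ K₄ * (n : ℝ) ^ ((1 : ℝ) / 6 - τ)

/-- Moment and tail conditions of the `(α_c, α₂)`-universality class (Definition 3). -/
def UnivMoments {Ω : Type*} [MeasurableSpace Ω] (μ : Measure Ω) {n p : ℕ}
    (αc α₂ K₃ : ℝ) (X Z : Ω → Fin n → Fin p → ℝ) : Prop :=
  ∀ (i : Fin n) (j : Fin p),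
    Measurable (fun ω => X ω i j) ∧ Measurable (fun ω => Z ω i j) ∧
    (∫ ω, X ω i j ∂μ) = 0 ∧ (∫ ω, Z ω i j ∂μ) = 0 ∧
    (∫ ω, Z ω i j ^ 2 ∂μ) = α₂ / p ∧ (∫ ω, X ω i j * Z ω i j ∂μ) = αc / p ∧
    (∫ ω, X ω i j ^ 2 ∂μ) = 1 / p ∧
    psi2 μ (fun ω => X ω i j) ≤ K₃ / Real.sqrt p ∧
    psi2 μ (fun ω => Z ω i j) ≤ K₃ / Real.sqrt p

/-- `ψ(θ) = φ(σ(θ), ξ(θ))`. -/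
def psiOf {p : ℕ} (φ : ℝ → ℝ → ℝ) (R : ℝ) (θ₀ θ : Fin p → ℝ) : ℝ :=
  φ (sigmaOf θ₀ θ) (xiOf R θ₀ θ)

section Aux
set_option maxHeartbeats 1000000

def Ee {p : ℕ} (a : Fin p → ℝ) : EuclideanSpace ℝ (Fin p) := (WithLp.equiv 2 _).symm a

lemma normE {p : ℕ} (a : Fin p → ℝ) : ‖Ee a‖ = Real.sqrt (∑ j, a j ^ 2) := by
  rw [EuclideanSpace.norm_eq]
  congr 1
  refine Finset.sum_congr rfl fun j _ => ?_
  simp [Ee, Real.norm_eq_abs, sq_abs]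

lemma normE_sq {p : ℕ} (a : Fin p → ℝ) : ‖Ee a‖ ^ 2 = ∑ j, a j ^ 2 := by
  rw [normE, Real.sq_sqrt (Finset.sum_nonneg fun j _ => sq_nonneg _)]

lemma innerE {p : ℕ} (a b : Fin p → ℝ) : (inner ℝ (Ee a) (Ee b) : ℝ) = dotp a b := by
  simp [Ee, dotp, PiLp.inner_apply, RCLike.inner_apply, mul_comm]

lemma Ee_sub {p : ℕ} (a b : Fin p → ℝ) : Ee (fun j => a j - b j) = Ee a - Ee b := rfl

lemma rho_zero_le_one : rho 0 ≤ 1 := by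
  have : rho 0 = Real.log 2 := by norm_num [rho]
  rw [this]
  linarith [Real.log_two_lt_d9]

lemma rho_midpoint (a b : ℝ) : rho ((a + b) / 2) ≤ (rho a + rho b) / 2 := by
  have hm : Real.exp ((a + b) / 2) = Real.exp (a / 2) * Real.exp (b / 2) := by
    rw [← Real.exp_add]; ring_nf
  have ha : Real.exp a = Real.exp (a / 2) ^ 2 := by
    rw [sq, ← Real.exp_add]; ring_nf
  have hb : Real.exp b = Real.exp (b / 2) ^ 2 := by
    rw [sq, ← Real.exp_add]; ring_nf
  have hx := Real.exp_pos (a / 2)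
  have hy := Real.exp_pos (b / 2)
  have key : (1 + Real.exp ((a + b) / 2)) ^ 2 ≤ (1 + Real.exp a) * (1 + Real.exp b) := by
    rw [hm, ha, hb]; nlinarith [sq_nonneg (Real.exp (a / 2) - Real.exp (b / 2))]
  have h1 : (0:ℝ) < 1 + Real.exp ((a + b) / 2) := by positivity
  have h2 : (0:ℝ) < 1 + Real.exp a := by positivity
  have h3 : (0:ℝ) < 1 + Real.exp b := by positivity
  have := Real.log_le_log (by positivity) key
  rw [Real.log_pow, Real.log_mul (ne_of_gt h2) (ne_of_gt h3)] at this
  unfold rho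
  push_cast at this
  linarith

lemma dotp_mid {p : ℕ} (z a b : Fin p → ℝ) :
    dotp z (fun j => (a j + b j) / 2) = (dotp z a + dotp z b) / 2 := by
  rw [dotp, dotp, dotp, ← Finset.sum_add_distrib, Finset.sum_div]
  exact Finset.sum_congr rfl fun j _ => by ring

lemma sum_sq_mid {p : ℕ} (a b : Fin p → ℝ) :
    ∑ j, ((a j + b j) / 2) ^ 2
      = (∑ j, a j ^ 2 + ∑ j, b j ^ 2) / 2 - (∑ j, (b j - a j) ^ 2) / 4 := by
  rw [← Finset.sum_add_distrib, Finset.sum_div, Finset.sum_div (f := fun j => (b j - a j)^2),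
    ← Finset.sum_sub_distrib]
  exact Finset.sum_congr rfl fun j _ => by ring

/-- Strong-minimum property of the ridge-regularized loss. -/
lemma strong_min {n p : ℕ} (y : Fin n → ℝ) (Z : Fin n → Fin p → ℝ) {lam : ℝ}
    (hlam : 0 ≤ lam) (hp : 0 < p) {θh : Fin p → ℝ}
    (hmin : ∀ θ, Ln y Z lam θh ≤ Ln y Z lam θ) (θ : Fin p → ℝ) :
    Ln y Z lam θh + lam / (4 * p) * ∑ j, (θ j - θh j) ^ 2 ≤ Ln y Z lam θ := by
  set m : Fin p → ℝ := fun j => (θh j + θ j) / 2 with hm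
  have hG : (1 / (n : ℝ)) * ∑ i, rho (-(y i * dotp (Z i) m))
      ≤ ((1 / (n : ℝ)) * ∑ i, rho (-(y i * dotp (Z i) θh))
        + (1 / (n : ℝ)) * ∑ i, rho (-(y i * dotp (Z i) θ))) / 2 := by
    have hn : (0:ℝ) ≤ 1 / (n : ℝ) := by positivity
    have hsum : ∑ i, rho (-(y i * dotp (Z i) m))
        ≤ (∑ i, rho (-(y i * dotp (Z i) θh)) + ∑ i, rho (-(y i * dotp (Z i) θ))) / 2 := by
      rw [← Finset.sum_add_distrib, Finset.sum_div]
      refine Finset.sum_le_sum fun i _ => ?_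
      rw [div_eq_mul_inv] at *
      have := rho_midpoint (-(y i * dotp (Z i) θh)) (-(y i * dotp (Z i) θ))
      have harg : -(y i * dotp (Z i) m)
          = ((-(y i * dotp (Z i) θh)) + (-(y i * dotp (Z i) θ))) / 2 := by
        rw [hm, dotp_mid]; ring
      rw [harg]; exact this
    nlinarith [hsum]
  have hS := sum_sq_mid θh θ
  have hmin' := hmin m
  have hp' : (0:ℝ) < (p : ℝ) := by exact_mod_cast hp
  have hquad : lam / (2 * p) * ∑ j, m j ^ 2
      = lam / (2 * p) * ((∑ j, θh j ^ 2 + ∑ j, θ j ^ 2) / 2 - (∑ j, (θ j - θh j) ^ 2) / 4) := by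
    rw [hm]; rw [sum_sq_mid]
  have hexp : Ln y Z lam m ≤ (Ln y Z lam θh + Ln y Z lam θ) / 2
      - lam / (8 * p) * ∑ j, (θ j - θh j) ^ 2 := by
    unfold Ln
    rw [hquad]
    have : lam / (2 * p) * ((∑ j, θh j ^ 2 + ∑ j, θ j ^ 2) / 2 - (∑ j, (θ j - θh j) ^ 2) / 4)
        = (lam / (2 * p) * ∑ j, θh j ^ 2 + lam / (2 * p) * ∑ j, θ j ^ 2) / 2
          - lam / (8 * p) * ∑ j, (θ j - θh j) ^ 2 := by
      field_simp; ring
    rw [this]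
    linarith [hG]
  have := hmin m
  have h8 : lam / (8 * p) * ∑ j, (θ j - θh j) ^ 2 ≤ (Ln y Z lam θ - Ln y Z lam θh) / 2 := by
    linarith
  have : lam / (4 * p) * ∑ j, (θ j - θh j) ^ 2 = 2 * (lam / (8 * p) * ∑ j, (θ j - θh j) ^ 2) := by
    field_simp; ring
  linarith [h8, this.le, this.ge]

lemma norm_bound {n p : ℕ} (hn : 0 < n) {K₁ lam : ℝ} (hK₁ : 0 < K₁) (hl : K₁ ≤ lam)
    (y : Fin n → ℝ) (Z : Fin n → Fin p → ℝ) {θh : Fin p → ℝ}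
    (hmin : ∀ θ, Ln y Z lam θh ≤ Ln y Z lam θ) :
    ∑ j, θh j ^ 2 ≤ 2 * p / K₁ := by
  have hp0 : (0:ℝ) ≤ (p:ℝ) := Nat.cast_nonneg p
  have hn0 : (0:ℝ) < (n:ℝ) := by exact_mod_cast hn
  have hzero : Ln y Z lam (fun _ => 0) = rho 0 := by
    unfold Ln
    have h1 : ∀ i : Fin n, rho (-(y i * dotp (Z i) fun _ => 0)) = rho 0 := by
      intro i; simp [dotp]
    rw [Finset.sum_congr rfl fun i _ => h1 i]
    simp [Finset.card_fin]
    field_simp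
  have hle : Ln y Z lam θh ≤ rho 0 := hzero ▸ hmin (fun _ => 0)
  have hGnn : 0 ≤ (1 / (n : ℝ)) * ∑ i, rho (-(y i * dotp (Z i) θh)) := by
    exact mul_nonneg (one_div_nonneg.mpr hn0.le)
      (Finset.sum_nonneg fun i _ => rho_nonneg _)
  have hSnn : 0 ≤ ∑ j, θh j ^ 2 := Finset.sum_nonneg fun j _ => sq_nonneg _
  have hq : lam / (2 * (p:ℝ)) * ∑ j, θh j ^ 2 ≤ 1 := by
    have := rho_zero_le_one
    unfold Ln at hle; linarith
  -- from lam/(2p) S ≤ 1 and K₁ ≤ lam: K₁ S ≤ 2p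
  rcases Nat.eq_zero_or_pos p with hp | hp
  · subst hp; simp
  · have hp' : (0:ℝ) < (p:ℝ) := by exact_mod_cast hp
    rw [div_mul_eq_mul_div, div_le_one (by positivity)] at hq
    have : K₁ * ∑ j, θh j ^ 2 ≤ lam * ∑ j, θh j ^ 2 :=
      mul_le_mul_of_nonneg_right hl hSnn
    rw [le_div_iff₀ hK₁]
    linarith

/-- Orthogonal projection is a contraction. -/
lemma perp_contract {p : ℕ} (θ₀ v : Fin p → ℝ) (h0 : dotp θ₀ θ₀ ≠ 0) :
    ‖Ee (projPerp θ₀ v)‖ ≤ ‖Ee v‖ := by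
  set c : ℝ := dotp v θ₀ / dotp θ₀ θ₀ with hc
  have hP : Ee (projPerp θ₀ v) = Ee v - c • Ee θ₀ := rfl
  have horth : (inner ℝ (Ee v - c • Ee θ₀) (Ee θ₀) : ℝ) = 0 := by
    rw [inner_sub_left, real_inner_smul_left, innerE, innerE, hc,
      div_mul_cancel₀ _ h0, sub_self]
  have horth2 : (inner ℝ (Ee v - c • Ee θ₀) (c • Ee θ₀) : ℝ) = 0 := by
    rw [real_inner_smul_right, horth, mul_zero]
  have hpyth : ‖Ee v‖ ^ 2 = ‖Ee v - c • Ee θ₀‖ ^ 2 + ‖c • Ee θ₀‖ ^ 2 := by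
    have hkey := norm_add_sq_real (Ee v - c • Ee θ₀) (c • Ee θ₀)
    rw [sub_add_cancel, horth2] at hkey
    linarith
  rw [hP]
  have h1 : ‖Ee v - c • Ee θ₀‖ ^ 2 ≤ ‖Ee v‖ ^ 2 := by nlinarith [sq_nonneg ‖c • Ee θ₀‖]
  calc ‖Ee v - c • Ee θ₀‖ = Real.sqrt (‖Ee v - c • Ee θ₀‖ ^ 2) :=
        (Real.sqrt_sq (norm_nonneg _)).symm
    _ ≤ Real.sqrt (‖Ee v‖ ^ 2) := Real.sqrt_le_sqrt h1
    _ = ‖Ee v‖ := Real.sqrt_sq (norm_nonneg _)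

lemma dotp_sub_left {p : ℕ} (a b c : Fin p → ℝ) :
    dotp (fun j => a j - b j) c = dotp a c - dotp b c := by
  rw [dotp, dotp, dotp, ← Finset.sum_sub_distrib]
  exact Finset.sum_congr rfl fun j _ => by ring

lemma projPerp_sub {p : ℕ} (θ₀ a b : Fin p → ℝ) :
    projPerp θ₀ (fun j => a j - b j) = fun j => projPerp θ₀ a j - projPerp θ₀ b j := by
  funext j
  simp only [projPerp, projPar, dotp_sub_left]
  ring

/-- The key deterministic Lipschitz estimate. -/
lemma key_lip {n p : ℕ} (hn : 0 < n) (hp : 0 < p) {K₁ R : ℝ} (hK₁ : 0 < K₁) (hR : K₁ ≤ R)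
    (θ₀ : Fin p → ℝ) (hθ₀ : (∑ j, θ₀ j ^ 2) = R ^ 2 * p)
    (y : Fin n → ℝ) (Z : Fin n → Fin p → ℝ)
    {lam₁ lam₂ : ℝ} (hl1 : K₁ ≤ lam₁) (hl2 : K₁ ≤ lam₂)
    {θ₁ θ₂ : Fin p → ℝ}
    (hm1 : ∀ θ, Ln y Z lam₁ θ₁ ≤ Ln y Z lam₁ θ)
    (hm2 : ∀ θ, Ln y Z lam₂ θ₂ ≤ Ln y Z lam₂ θ)
    (φ : ℝ → ℝ → ℝ)
    (hφ : ∀ a b c d : ℝ, |φ a b - φ c d| ≤ Real.sqrt ((a - c) ^ 2 + (b - d) ^ 2)) :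
    |psiOf φ R θ₀ θ₁ - psiOf φ R θ₀ θ₂|
      ≤ ((1 + 1 / K₁) * (2 * Real.sqrt (2 / K₁)) / K₁) * |lam₁ - lam₂| := by
  have hp' : (0:ℝ) < (p:ℝ) := by exact_mod_cast hp
  have hR0 : 0 < R := lt_of_lt_of_le hK₁ hR
  have hD21 : ∑ j, (θ₁ j - θ₂ j) ^ 2 = ‖Ee θ₁ - Ee θ₂‖ ^ 2 := by
    rw [← normE_sq (fun j => θ₁ j - θ₂ j), Ee_sub]
  have hD12 : ∑ j, (θ₂ j - θ₁ j) ^ 2 = ‖Ee θ₁ - Ee θ₂‖ ^ 2 := by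
    rw [← hD21]
    exact Finset.sum_congr rfl fun j _ => by ring
  have hSa' : ∑ j, θ₁ j ^ 2 = ‖Ee θ₁‖ ^ 2 := (normE_sq θ₁).symm
  have hSb' : ∑ j, θ₂ j ^ 2 = ‖Ee θ₂‖ ^ 2 := (normE_sq θ₂).symm
  set u := Ee θ₁ with hudef
  set v := Ee θ₂ with hvdef
  set w := Ee θ₀ with hwdef
  set a := ‖u‖ with hadef
  set b := ‖v‖ with hbdef
  set d := ‖u - v‖ with hddef
  have hd0 : 0 ≤ d := norm_nonneg _
  set Δ := |lam₁ - lam₂| with hΔdef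
  set M := Real.sqrt (2 * p / K₁) with hMdef
  have hM0 : 0 ≤ M := Real.sqrt_nonneg _
  have hSa : ∑ j, θ₁ j ^ 2 = a ^ 2 := hSa'
  have hSb : ∑ j, θ₂ j ^ 2 = b ^ 2 := hSb'
  have hA := strong_min y Z (le_of_lt (lt_of_lt_of_le hK₁ hl1)) hp hm1 θ₂
  have hB := strong_min y Z (le_of_lt (lt_of_lt_of_le hK₁ hl2)) hp hm2 θ₁
  rw [hD12] at hA
  rw [hD21] at hB
  have hLn : ∀ θ : Fin p → ℝ, Ln y Z lam₂ θ
      = Ln y Z lam₁ θ + (lam₂ - lam₁) / (2 * p) * ∑ j, θ j ^ 2 := by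
    intro θ; unfold Ln; ring
  rw [hLn θ₂, hLn θ₁, hSa, hSb] at hB
  -- combine: lam₁/(4p) d² + lam₂/(4p) d² ≤ (lam₂-lam₁)/(2p) (a²-b²)
  have hcomb : lam₁ / (4 * (p:ℝ)) * d ^ 2 + lam₂ / (4 * (p:ℝ)) * d ^ 2
      ≤ (lam₂ - lam₁) / (2 * (p:ℝ)) * a ^ 2 - (lam₂ - lam₁) / (2 * (p:ℝ)) * b ^ 2 := by
    linarith
  have hcs : |a ^ 2 - b ^ 2| ≤ d * (a + b) := by
    have h1 : a ^ 2 - b ^ 2 = (inner ℝ (u - v) (u + v) : ℝ) := by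
      rw [inner_sub_left, inner_add_right, inner_add_right,
        real_inner_self_eq_norm_sq, real_inner_self_eq_norm_sq, real_inner_comm v u]
      ring
    have h2 := abs_real_inner_le_norm (u - v) (u + v)
    have h3 : ‖u + v‖ ≤ a + b := norm_add_le u v
    rw [h1]
    calc |(inner ℝ (u - v) (u + v) : ℝ)| ≤ ‖u - v‖ * ‖u + v‖ := h2
      _ ≤ d * (a + b) := mul_le_mul_of_nonneg_left h3 hd0
  have ha2 : a ≤ M := by
    rw [hadef, hMdef, normE]
    exact Real.sqrt_le_sqrt (norm_bound hn hK₁ hl1 y Z hm1)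
  have hb2 : b ≤ M := by
    rw [hbdef, hMdef, normE]
    exact Real.sqrt_le_sqrt (norm_bound hn hK₁ hl2 y Z hm2)
  have ha0 : 0 ≤ a := norm_nonneg _
  have hb0 : 0 ≤ b := norm_nonneg _
  have hq : K₁ * d ^ 2 ≤ Δ * (d * (2 * M)) := by
    have e1 : (lam₂ - lam₁) / (2 * (p:ℝ)) * a ^ 2 - (lam₂ - lam₁) / (2 * (p:ℝ)) * b ^ 2
        = (lam₂ - lam₁) * (a ^ 2 - b ^ 2) / (2 * (p:ℝ)) := by ring
    have e2 : (lam₂ - lam₁) * (a ^ 2 - b ^ 2) ≤ Δ * (d * (a + b)) := by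
      calc (lam₂ - lam₁) * (a ^ 2 - b ^ 2) ≤ |(lam₂ - lam₁) * (a ^ 2 - b ^ 2)| := le_abs_self _
        _ = |lam₂ - lam₁| * |a ^ 2 - b ^ 2| := abs_mul _ _
        _ = Δ * |a ^ 2 - b ^ 2| := by rw [hΔdef, abs_sub_comm]
        _ ≤ Δ * (d * (a + b)) := mul_le_mul_of_nonneg_left hcs (abs_nonneg _)
    have e3 : Δ * (d * (a + b)) ≤ Δ * (d * (2 * M)) := by
      have : d * (a + b) ≤ d * (2 * M) := by nlinarith
      exact mul_le_mul_of_nonneg_left this (abs_nonneg _)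
    -- multiply hcomb by 2p, use lam₁+lam₂ ≥ 2K₁
    have h2p : (0:ℝ) < 2 * (p:ℝ) := by positivity
    have hmul : (lam₁ + lam₂) / 2 * d ^ 2 ≤ (lam₂ - lam₁) * (a ^ 2 - b ^ 2) := by
      rw [e1] at hcomb
      have := mul_le_mul_of_nonneg_left hcomb (le_of_lt h2p)
      have heq1 : (2 * (p:ℝ)) * (lam₁ / (4 * (p:ℝ)) * d ^ 2 + lam₂ / (4 * (p:ℝ)) * d ^ 2)
          = (lam₁ + lam₂) / 2 * d ^ 2 := by field_simp; ring
      have heq2 : (2 * (p:ℝ)) * ((lam₂ - lam₁) * (a ^ 2 - b ^ 2) / (2 * (p:ℝ)))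
          = (lam₂ - lam₁) * (a ^ 2 - b ^ 2) := by field_simp
      rw [heq1, heq2] at this
      exact this
    nlinarith [hmul, e2, e3]
  have hdle : d ≤ 2 * Δ * M / K₁ := by
    rcases eq_or_lt_of_le hd0 with h | h
    · rw [← h]; positivity
    · rw [le_div_iff₀ hK₁]
      have : K₁ * d * d ≤ 2 * Δ * M * d := by nlinarith [hq]
      exact le_of_mul_le_mul_right (by nlinarith [this]) h
  -- step 2: ψ Lipschitz in θ
  have hw : ‖w‖ = R * Real.sqrt p := by
    rw [normE, hθ₀, Real.sqrt_mul (sq_nonneg R), Real.sqrt_sq hR0.le]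
  have hw2 : dotp θ₀ θ₀ = R ^ 2 * p := by
    have : dotp θ₀ θ₀ = ∑ j, θ₀ j ^ 2 := Finset.sum_congr rfl fun j _ => (sq (θ₀ j)).symm
    rw [this, hθ₀]
  have hw2ne : dotp θ₀ θ₀ ≠ 0 := by rw [hw2]; positivity
  have hsqp : (0:ℝ) < Real.sqrt p := Real.sqrt_pos.mpr hp'
  -- ξ difference
  have hxi : |xiOf R θ₀ θ₁ - xiOf R θ₀ θ₂| ≤ d / (R * Real.sqrt p) := by
    have h1 : xiOf R θ₀ θ₁ - xiOf R θ₀ θ₂ = (inner ℝ (u - v) w : ℝ) / (R ^ 2 * p) := by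
      rw [← Ee_sub, innerE, dotp_sub_left]
      unfold xiOf; ring
    rw [h1, abs_div, abs_of_pos (by positivity : (0:ℝ) < R ^ 2 * (p:ℝ)),
      div_le_div_iff₀ (by positivity) (by positivity)]
    calc |(inner ℝ (u - v) w : ℝ)| * (R * Real.sqrt p) ≤ (d * ‖w‖) * (R * Real.sqrt p) := by
          exact mul_le_mul_of_nonneg_right (abs_real_inner_le_norm _ _) (by positivity)
      _ = d * (R ^ 2 * p) := by
          rw [hw]
          linear_combination d * R ^ 2 * Real.sq_sqrt hp'.le
  -- σ difference
  have hsig : |sigmaOf θ₀ θ₁ - sigmaOf θ₀ θ₂| ≤ d / Real.sqrt p := by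
    have h1 : sigmaOf θ₀ θ₁ - sigmaOf θ₀ θ₂
        = (enorm2 (projPerp θ₀ θ₁) - enorm2 (projPerp θ₀ θ₂)) / Real.sqrt p := by
      unfold sigmaOf; ring
    rw [h1, abs_div, abs_of_pos hsqp, div_le_div_iff₀ hsqp hsqp]
    have h2 : |enorm2 (projPerp θ₀ θ₁) - enorm2 (projPerp θ₀ θ₂)| ≤ d := by
      have e1 : enorm2 (projPerp θ₀ θ₁) = ‖Ee (projPerp θ₀ θ₁)‖ := (normE _).symm
      have e2 : enorm2 (projPerp θ₀ θ₂) = ‖Ee (projPerp θ₀ θ₂)‖ := (normE _).symm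
      rw [e1, e2]
      calc |‖Ee (projPerp θ₀ θ₁)‖ - ‖Ee (projPerp θ₀ θ₂)‖|
          ≤ ‖Ee (projPerp θ₀ θ₁) - Ee (projPerp θ₀ θ₂)‖ := abs_norm_sub_norm_le _ _
        _ = ‖Ee (projPerp θ₀ (fun j => θ₁ j - θ₂ j))‖ := by
            rw [projPerp_sub, Ee_sub]
        _ ≤ ‖Ee (fun j => θ₁ j - θ₂ j)‖ := perp_contract θ₀ _ hw2ne
        _ = d := by rw [Ee_sub]
    exact mul_le_mul_of_nonneg_right h2 hsqp.le
  -- combine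
  have hphi := hφ (sigmaOf θ₀ θ₁) (xiOf R θ₀ θ₁) (sigmaOf θ₀ θ₂) (xiOf R θ₀ θ₂)
  have hsqrt : Real.sqrt ((sigmaOf θ₀ θ₁ - sigmaOf θ₀ θ₂) ^ 2 + (xiOf R θ₀ θ₁ - xiOf R θ₀ θ₂) ^ 2)
      ≤ |sigmaOf θ₀ θ₁ - sigmaOf θ₀ θ₂| + |xiOf R θ₀ θ₁ - xiOf R θ₀ θ₂| := by
    rw [show (sigmaOf θ₀ θ₁ - sigmaOf θ₀ θ₂) ^ 2 + (xiOf R θ₀ θ₁ - xiOf R θ₀ θ₂) ^ 2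
        = |sigmaOf θ₀ θ₁ - sigmaOf θ₀ θ₂| ^ 2 + |xiOf R θ₀ θ₁ - xiOf R θ₀ θ₂| ^ 2 by
          rw [sq_abs, sq_abs]]
    calc Real.sqrt (|sigmaOf θ₀ θ₁ - sigmaOf θ₀ θ₂| ^ 2 + |xiOf R θ₀ θ₁ - xiOf R θ₀ θ₂| ^ 2)
        ≤ Real.sqrt ((|sigmaOf θ₀ θ₁ - sigmaOf θ₀ θ₂| + |xiOf R θ₀ θ₁ - xiOf R θ₀ θ₂|) ^ 2) := by
          apply Real.sqrt_le_sqrt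
          nlinarith [abs_nonneg (sigmaOf θ₀ θ₁ - sigmaOf θ₀ θ₂),
            abs_nonneg (xiOf R θ₀ θ₁ - xiOf R θ₀ θ₂),
            mul_nonneg (abs_nonneg (sigmaOf θ₀ θ₁ - sigmaOf θ₀ θ₂))
              (abs_nonneg (xiOf R θ₀ θ₁ - xiOf R θ₀ θ₂))]
      _ = |sigmaOf θ₀ θ₁ - sigmaOf θ₀ θ₂| + |xiOf R θ₀ θ₁ - xiOf R θ₀ θ₂| :=
          Real.sqrt_sq (by positivity)
  set t := d / Real.sqrt p with htdef
  have ht0 : 0 ≤ t := by positivity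
  have hxiT : |xiOf R θ₀ θ₁ - xiOf R θ₀ θ₂| ≤ t / K₁ := by
    have h1 : d / (R * Real.sqrt p) = (d / Real.sqrt p) / R := by ring
    have h2 : t / R ≤ t / K₁ := div_le_div_of_nonneg_left ht0 hK₁ hR
    calc |xiOf R θ₀ θ₁ - xiOf R θ₀ θ₂| ≤ d / (R * Real.sqrt p) := hxi
      _ = t / R := by rw [h1, htdef]
      _ ≤ t / K₁ := h2
  have hT : t ≤ 2 * Δ * Real.sqrt (2 / K₁) / K₁ := by
    rw [htdef, div_le_iff₀ hsqp]
    have hM : M = Real.sqrt p * Real.sqrt (2 / K₁) := by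
      rw [hMdef, ← Real.sqrt_mul hp'.le]
      congr 1; field_simp
    calc d ≤ 2 * Δ * M / K₁ := hdle
      _ = 2 * Δ * Real.sqrt (2 / K₁) / K₁ * Real.sqrt p := by rw [hM]; ring
  have hfinal : |psiOf φ R θ₀ θ₁ - psiOf φ R θ₀ θ₂| ≤ (1 + 1 / K₁) * t := by
    unfold psiOf
    calc |φ (sigmaOf θ₀ θ₁) (xiOf R θ₀ θ₁) - φ (sigmaOf θ₀ θ₂) (xiOf R θ₀ θ₂)|
        ≤ Real.sqrt ((sigmaOf θ₀ θ₁ - sigmaOf θ₀ θ₂) ^ 2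
            + (xiOf R θ₀ θ₁ - xiOf R θ₀ θ₂) ^ 2) := hphi
      _ ≤ |sigmaOf θ₀ θ₁ - sigmaOf θ₀ θ₂| + |xiOf R θ₀ θ₁ - xiOf R θ₀ θ₂| := hsqrt
      _ ≤ t + t / K₁ := add_le_add hsig hxiT
      _ = (1 + 1 / K₁) * t := by ring
  calc |psiOf φ R θ₀ θ₁ - psiOf φ R θ₀ θ₂| ≤ (1 + 1 / K₁) * t := hfinal
    _ ≤ (1 + 1 / K₁) * (2 * Δ * Real.sqrt (2 / K₁) / K₁) :=
        mul_le_mul_of_nonneg_left hT (by positivity)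
    _ = (1 + 1 / K₁) * (2 * Real.sqrt (2 / K₁)) / K₁ * Δ := by ring

end Aux

/-- (Lemma 7(a)) With probability at least `1 − 2e^{−n}`, the map
`λ ↦ ψ(θ̂(Z, λ))` is `L₁`-Lipschitz on `[K₁, K₂]`, where `L₁` depends only on
`(K₁, K₂, K₃, K₄, τ)`. -/
theorem statement10 (K₁ K₂ K₃ K₄ τ : ℝ) (hK₁ : 0 < K₁) (hK : K₁ ≤ K₂) (hK₃ : 0 < K₃) :
    ∃ L₁ : ℝ, 0 < L₁ ∧
      ∀ (n p : ℕ), 0 < n → 0 < p →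
      ∀ (δ R αc α₂ : ℝ), Assump1 K₁ K₂ δ R αc α₂ →
        (n : ℝ) / (p : ℝ) = δ →
      ∀ (θ₀ : Fin p → ℝ), (∑ j, θ₀ j ^ 2) = R ^ 2 * p → Assump2 K₄ τ n θ₀ →
      ∀ (Ω : Type) (_ : MeasurableSpace Ω) (μ : Measure Ω), IsProbabilityMeasure μ →
      ∀ (X Z : Ω → Fin n → Fin p → ℝ) (U : Ω → Fin n → ℝ),
        (∀ i, Measurable (fun ω => U ω i)) →
        -- the pairs `(X_{ij}, Z_{ij})` and the uniform variables `U_i` are mutually independent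
        iIndepFun (m := fun _ => (inferInstance : MeasurableSpace (ℝ × ℝ)))
          (Sum.elim
            (fun (ij : Fin n × Fin p) ω => (X ω ij.1 ij.2, Z ω ij.1 ij.2))
            (fun (i : Fin n) ω => (U ω i, (0 : ℝ)))) μ →
        -- moment and sub-Gaussian conditions of the `(α_c, α₂)`-universality class
        UnivMoments μ αc α₂ K₃ X Z →
        (∀ i, μ.map (fun ω => U ω i) = volume.restrict (Icc (0 : ℝ) 1)) →
      ∀ (y : Ω → Fin n → ℝ),
        -- logistic labels generated from `X` and `θ₀`
        (∀ ω i, y ω i = labelOf (U ω i) (dotp (X ω i) θ₀)) →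
      ∀ (θhat : Ω → ℝ → Fin p → ℝ),
        -- for each `λ ∈ [K₁, K₂]`, `θ̂(Z, λ)` minimizes the ridge-regularized logistic loss
        (∀ ω lam, lam ∈ Icc K₁ K₂ →
          ∀ θ, Ln (y ω) (Z ω) lam (θhat ω lam) ≤ Ln (y ω) (Z ω) lam θ) →
      ∀ (φ : ℝ → ℝ → ℝ),
        -- `φ` is 1-Lipschitz
        (∀ a b c d : ℝ, |φ a b - φ c d| ≤ Real.sqrt ((a - c) ^ 2 + (b - d) ^ 2)) →
        ENNReal.ofReal (1 - 2 * Real.exp (-(n : ℝ)))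
          ≤ μ {ω | ∀ lam₁ ∈ Icc K₁ K₂, ∀ lam₂ ∈ Icc K₁ K₂,
              |psiOf φ R θ₀ (θhat ω lam₁) - psiOf φ R θ₀ (θhat ω lam₂)|
                ≤ L₁ * |lam₁ - lam₂|} := by
  refine ⟨(1 + 1 / K₁) * (2 * Real.sqrt (2 / K₁)) / K₁, ?_, ?_⟩
  · have h2 : (0:ℝ) < Real.sqrt (2 / K₁) := Real.sqrt_pos.mpr (by positivity)
    positivity
  · intro n p hn hp δ R αc α₂ hA hδ θ₀ hθ₀ hA2 Ω _ μ hμ X Z U hU hindep hmom hunif y hy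
      θhat hmin φ hφ
    have hR : K₁ ≤ R := hA.2.2.2.1.1
    have hset : {ω | ∀ lam₁ ∈ Icc K₁ K₂, ∀ lam₂ ∈ Icc K₁ K₂,
        |psiOf φ R θ₀ (θhat ω lam₁) - psiOf φ R θ₀ (θhat ω lam₂)|
          ≤ (1 + 1 / K₁) * (2 * Real.sqrt (2 / K₁)) / K₁ * |lam₁ - lam₂|} = univ := by
      refine Set.eq_univ_of_forall fun ω => ?_
      intro lam₁ h1 lam₂ h2
      exact key_lip hn hp hK₁ hR θ₀ hθ₀ (y ω) (Z ω) h1.1 h2.1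
        (hmin ω lam₁ h1) (hmin ω lam₂ h2) φ hφ
    rw [hset, measure_univ]
    refine ENNReal.ofReal_le_one.mpr ?_
    have := Real.exp_pos (-(n : ℝ))
    linarith


end
end

section
/- Let T ⊆ ℝ^p be a nonempty closed convex set, let F : ℝ^p → ℝ be continuous and μ-strongly convex for some μ > 0, and let ψ : ℝ^p → ℝ be K-Lipschitz. Let θ̂ be the (unique) minimizer of F over T, for s > 0 let m(s) = min_{θ∈T}( F(θ) + s·ψ(θ) ) (the minimum is attained), m(0) = F(θ̂), and define the difference quotient D(s) = (m(s) − m(0))/s. Then for every s > 0: 0 ≤ ψ(θ̂) − D(s) ≤ 2K²s/μ. -/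
open Set

noncomputable section

/-- If `θ̂` minimizes a `μ`-strongly convex `F` over a convex set `T`, then for any `θ ∈ T`,
`F θ̂ + μ/2 ‖θ - θ̂‖² ≤ F θ`. -/
lemma strong_min_ineq {p : ℕ} {T : Set (EuclideanSpace ℝ (Fin p))} (hconv : Convex ℝ T)
    {F : EuclideanSpace ℝ (Fin p) → ℝ} {μ : ℝ}
    (hFsc : ConvexOn ℝ univ (fun θ => F θ - μ / 2 * ‖θ‖ ^ 2))
    {θhat : EuclideanSpace ℝ (Fin p)} (hmem : θhat ∈ T)
    (hmin : ∀ θ ∈ T, F θhat ≤ F θ) {θ : EuclideanSpace ℝ (Fin p)} (hθ : θ ∈ T) :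
    F θhat + μ / 2 * ‖θ - θhat‖ ^ 2 ≤ F θ := by
  have hs : StrongConvexOn univ μ F := strongConvexOn_iff_convex.2 hFsc
  set c : ℝ := μ / 2 * ‖θ - θhat‖ ^ 2 with hc
  have key : ∀ t ∈ Ioc (0:ℝ) 1, (1 - t) * c ≤ F θ - F θhat := by
    rintro t ⟨ht0, ht1⟩
    have ht1' : (0:ℝ) ≤ 1 - t := by linarith
    have habt : t + (1 - t) = 1 := by ring
    have hsc := hs.2 (mem_univ θ) (mem_univ θhat) ht0.le ht1' habt
    have hmemT : t • θ + (1 - t) • θhat ∈ T := hconv hθ hmem ht0.le ht1' habt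
    have hlow : F θhat ≤ F (t • θ + (1 - t) • θhat) := hmin _ hmemT
    simp only [smul_eq_mul] at hsc
    have hmain : F θhat ≤ t * F θ + (1 - t) * F θhat - t * (1 - t) * (μ / 2 * ‖θ - θhat‖ ^ 2) :=
      le_trans hlow hsc
    have h2 : t * ((1 - t) * c) ≤ t * (F θ - F θhat) := by rw [hc]; nlinarith
    exact le_of_mul_le_mul_left h2 ht0
  have htends : Filter.Tendsto (fun t : ℝ => (1 - t) * c)
      (nhdsWithin 0 (Ioc (0:ℝ) 1)) (nhds c) := by
    have h1 : Filter.Tendsto (fun t : ℝ => (1 - t) * c) (nhds 0) (nhds ((1 - 0) * c)) :=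
      ((continuous_const.sub continuous_id).mul continuous_const).tendsto 0
    simpa using h1.mono_left nhdsWithin_le_nhds
  have hne' : (nhdsWithin (0:ℝ) (Ioc 0 1)).NeBot := by
    apply mem_closure_iff_nhdsWithin_neBot.1
    rw [closure_Ioc (by norm_num : (0:ℝ) ≠ 1)]
    exact ⟨le_refl 0, by norm_num⟩
  have hfin : c ≤ F θ - F θhat :=
    le_of_tendsto htends (eventually_nhdsWithin_of_forall key)
  linarith

/-- (Finite-differences approximation) If `F` is continuous and μ-strongly
convex, `ψ` is `K`-Lipschitz, `θ̂` minimizes `F` over a nonempty closed convex set `T`, and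
`m(s) = min_{θ ∈ T} (F(θ) + sψ(θ))` (attained), then the difference quotient
`D(s) = (m(s) − m(0))/s` satisfies `0 ≤ ψ(θ̂) − D(s) ≤ 2K²s/μ` for all `s > 0`. -/
theorem statement12 (p : ℕ) (T : Set (EuclideanSpace ℝ (Fin p)))
    (hne : T.Nonempty) (hclosed : IsClosed T) (hconv : Convex ℝ T)
    (F ψ : EuclideanSpace ℝ (Fin p) → ℝ) (μ K : ℝ) (hμ : 0 < μ)
    (hFcont : Continuous F)
    -- `F` is μ-strongly convex
    (hFsc : ConvexOn ℝ univ (fun θ => F θ - μ / 2 * ‖θ‖ ^ 2))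
    -- `ψ` is `K`-Lipschitz
    (hψ : ∀ θ θ' : EuclideanSpace ℝ (Fin p), |ψ θ - ψ θ'| ≤ K * ‖θ - θ'‖)
    (θhat : EuclideanSpace ℝ (Fin p)) (hmem : θhat ∈ T)
    -- `θ̂` minimizes `F` over `T`
    (hmin : ∀ θ ∈ T, F θhat ≤ F θ)
    (m : ℝ → ℝ) (hm0 : m 0 = F θhat)
    -- for `s > 0`, `m(s)` is the attained minimum of `F + sψ` over `T`
    (hm : ∀ s : ℝ, 0 < s → ∃ θ ∈ T,
      (∀ θ' ∈ T, F θ + s * ψ θ ≤ F θ' + s * ψ θ') ∧ m s = F θ + s * ψ θ) :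
    ∀ s : ℝ, 0 < s →
      0 ≤ ψ θhat - (m s - m 0) / s ∧ ψ θhat - (m s - m 0) / s ≤ 2 * K ^ 2 * s / μ := by
  intro s hs
  obtain ⟨θs, hθsT, hθsmin, hms⟩ := hm s hs
  set d : ℝ := ‖θs - θhat‖ with hd
  have hd0 : 0 ≤ d := norm_nonneg _
  -- upper bound on m s
  have hup : m s ≤ F θhat + s * ψ θhat := by
    rw [hms]; exact hθsmin θhat hmem
  -- strong convexity lower bound
  have hsc : F θhat + μ / 2 * d ^ 2 ≤ F θs :=
    strong_min_ineq hconv hFsc hmem hmin hθsT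
  -- Lipschitz bound
  have hlip : ψ θhat - ψ θs ≤ K * d := by
    have := hψ θhat θs
    have habs : ψ θhat - ψ θs ≤ |ψ θhat - ψ θs| := le_abs_self _
    have hnorm : ‖θhat - θs‖ = d := by rw [hd, norm_sub_rev]
    linarith [this, habs, hnorm ▸ this]
  constructor
  · -- 0 ≤ ψ θ̂ - D(s)
    rw [sub_nonneg, div_le_iff₀ hs, hm0]
    linarith
  · -- ψ θ̂ - D(s) ≤ 2K²s/μ
    have hmslow : F θhat + μ / 2 * d ^ 2 + s * ψ θs ≤ m s := by
      rw [hms]; linarith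
    have hDs : (m s - m 0) / s * s = m s - m 0 := div_mul_cancel₀ _ (ne_of_gt hs)
    rw [le_div_iff₀ hμ, ← mul_le_mul_iff_of_pos_right hs]
    have h1 : (ψ θhat - (m s - m 0) / s) * s ≤ K * d * s - μ / 2 * d ^ 2 := by
      nlinarith [hDs, hmslow, mul_le_mul_of_nonneg_left hlip hs.le, hm0]
    have h2 : (ψ θhat - (m s - m 0) / s) * μ * s ≤ μ * (K * d * s - μ / 2 * d ^ 2) := by
      nlinarith [mul_le_mul_of_nonneg_left h1 hμ.le]
    nlinarith [sq_nonneg (K * s - μ * d / 2), h2, sq_nonneg (K * s)]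

end
end
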